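/- arXiv:1402.3241 — 5 statements merged into one kernel-verified Lean document; each statement's English description precedes it below -/
import Mathlib

section
/- Let k be a field of characteristic 2 and let f in k[x,y] be irreducible with nonzero constant term, such that ∂f/∂y is not divisible by f and f has at least one monomial x^i y^j with both i and j odd. Suppose there exist polynomials H, G, α in k[x,y] with f not dividing H such that H^2 * x * y * (∂f/∂y) + α * f = G^2. Then a contradiction follows; i.e., x*y*(∂f/∂y) is not a square modulo the ideal generated by f in the stated sense. -/
/-!
Differentiating the relation in `y` (squares have zero derivatives in characteristic 2) gives
`f ∣ α + H²x`, say `α + H²x = fβ`; differentiating it in `x` then yields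
`H² · (1 + x∂ₓ)(1 + y∂_y) f = f² · ∂ₓβ`, so `f²` divides `A = (1 + x∂ₓ)(1 + y∂_y) f` since `f ∤ H`.
The operator `1 + x∂ₓ` scales the monomial `xⁱyʲ` by `1 + i`, so the support of `A` lies in that of
`f` and `A` has the constant term of `f`: a nonzero multiple of `f²` of total degree at most that
of `f`, which forces `f` to be constant.
-/

open MvPolynomial

namespace MvPolynomial

section CommSemiring

variable {R σ : Type*} [CommSemiring R]

theorem coeff_X_mul_pderiv (i : σ) (p : MvPolynomial σ R) (m : σ →₀ ℕ) :
    coeff m (X i * pderiv i p) = m i * coeff m p := by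
  classical
  induction p using MvPolynomial.induction_on' with
  | monomial n r =>
    rw [X_mul_pderiv_monomial, coeff_smul, coeff_monomial]
    split_ifs with h <;> simp [h, nsmul_eq_mul]
  | add p q hp hq => simp only [map_add, mul_add, coeff_add, hp, hq]

theorem coeff_add_X_mul_pderiv (i : σ) (p : MvPolynomial σ R) (m : σ →₀ ℕ) :
    coeff m (p + X i * pderiv i p) = (1 + m i) * coeff m p := by
  rw [coeff_add, coeff_X_mul_pderiv, add_mul, one_mul]

theorem support_add_X_mul_pderiv_subset (i : σ) (p : MvPolynomial σ R) :
    (p + X i * pderiv i p).support ⊆ p.support := by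
  intro m hm
  rw [mem_support_iff, coeff_add_X_mul_pderiv] at hm
  exact mem_support_iff.mpr (right_ne_zero_of_mul hm)

end CommSemiring

theorem eq_zero_of_sq_dvd_of_support_subset {k σ : Type*} [Field k] {f p : MvPolynomial σ k}
    (hf : ¬IsUnit f) (hdvd : f ^ 2 ∣ p) (hsupp : p.support ⊆ f.support) : p = 0 := by
  by_contra hp
  have hf0 : f ≠ 0 := by
    rintro rfl
    exact hp (zero_dvd_iff.mp (by simpa using hdvd))
  have hdeg : totalDegree (f ^ 2) ≤ totalDegree f :=
    (totalDegree_le_of_dvd_of_isDomain hdvd hp).trans (totalDegree_le_of_support_subset hsupp)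
  rw [pow_two, totalDegree_mul_of_isDomain hf0 hf0] at hdeg
  have hC := totalDegree_eq_zero_iff_eq_C.mp (by omega : totalDegree f = 0)
  rw [hC] at hf hf0
  exact hf ((Ne.isUnit (by simpa using hf0)).map C)

section CharTwo

variable {R σ : Type*} [CommRing R] [CharP R 2]

theorem pderiv_sq_of_charTwo (i : σ) (p : MvPolynomial σ R) : pderiv i (p ^ 2) = 0 := by
  rw [pderiv_pow, CharP.cast_eq_zero, zero_mul, zero_mul]

theorem pderiv_pderiv_self_of_charTwo (i : σ) (p : MvPolynomial σ R) :
    pderiv i (pderiv i p) = 0 := by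
  ext m
  rw [coeff_pderiv, coeff_pderiv, coeff_zero]
  have heven : (((m i + 1) * (m i + 1 + 1) : ℕ) : R) = 0 :=
    (CharP.cast_eq_zero_iff R 2 _).mpr (Nat.even_mul_succ_self _).two_dvd
  simp only [Finsupp.add_apply, Finsupp.single_eq_same, Nat.cast_mul, Nat.cast_add,
    Nat.cast_one] at heven ⊢
  linear_combination coeff (m + Finsupp.single i 1 + Finsupp.single i 1) p * heven

end CharTwo

end MvPolynomial

section CharTwo

variable {R σ : Type*} [CommRing R] [CharP R 2] {i j : σ} {f H G α : MvPolynomial σ R}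

theorem dvd_add_sq_mul_X (hij : i ≠ j) (hf : Prime f) (hdf : ¬f ∣ pderiv j f)
    (h : H ^ 2 * X i * X j * pderiv j f + α * f = G ^ 2) : f ∣ α + H ^ 2 * X i := by
  have e := congrArg (pderiv j) h
  simp only [map_add, pderiv_mul, pderiv_sq_of_charTwo, pderiv_X_self, pderiv_X_of_ne hij,
    pderiv_pderiv_self_of_charTwo, mul_zero, zero_mul, add_zero, zero_add, mul_one] at e
  have hdvd : f ∣ (α + H ^ 2 * X i) * pderiv j f := ⟨-pderiv j α, by linear_combination e⟩
  exact (hf.dvd_or_dvd hdvd).resolve_right hdf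

theorem sq_mul_add_X_mul_pderiv_eq (hij : i ≠ j) {β : MvPolynomial σ R}
    (h : H ^ 2 * X i * X j * pderiv j f + α * f = G ^ 2) (hβ : α + H ^ 2 * X i = f * β) :
    H ^ 2 * ((f + X j * pderiv j f) + X i * pderiv i (f + X j * pderiv j f)) =
      f ^ 2 * pderiv i β := by
  have two : (2 : MvPolynomial σ R) = 0 := CharTwo.two_eq_zero
  have e := congrArg (pderiv i) h
  have eβ := congrArg (pderiv i) hβ
  simp only [map_add, pderiv_mul, pderiv_sq_of_charTwo, pderiv_X_self, pderiv_X_of_ne hij.symm,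
    mul_zero, zero_mul, add_zero, zero_add, mul_one] at e eβ ⊢
  linear_combination e - f * eβ - pderiv i f * hβ +
    (H ^ 2 * f + H ^ 2 * X i * pderiv i f - f * pderiv i f * β - f ^ 2 * pderiv i β) * two

end CharTwo

theorem statement3_general (k : Type*) [Field k] [CharP k 2]
    (f : MvPolynomial (Fin 2) k) (hirr : Irreducible f)
    (hconst : coeff 0 f ≠ 0)
    (hdy : ¬ f ∣ pderiv 1 f)
    (H G α : MvPolynomial (Fin 2) k) (hH : ¬ f ∣ H)
    (heq : H ^ 2 * X 0 * X 1 * pderiv 1 f + α * f = G ^ 2) :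
    False := by
  have hprime : Prime f := hirr.prime
  obtain ⟨β, hβ⟩ := dvd_add_sq_mul_X zero_ne_one hprime hdy heq
  set g := f + X 1 * pderiv 1 f
  have hsq : f ^ 2 ∣ g + X 0 * pderiv 0 g :=
    hprime.pow_dvd_of_dvd_mul_left 2 (mt hprime.dvd_of_dvd_pow hH)
      ⟨_, sq_mul_add_X_mul_pderiv_eq zero_ne_one heq hβ⟩
  have hsupp : (g + X 0 * pderiv 0 g).support ⊆ f.support :=
    (support_add_X_mul_pderiv_subset 0 g).trans (support_add_X_mul_pderiv_subset 1 f)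
  refine hconst ?_
  have hcoeff := congrArg (coeff 0) (eq_zero_of_sq_dvd_of_support_subset hirr.not_isUnit hsq hsupp)
  simpa only [g, coeff_add_X_mul_pderiv, Finsupp.coe_zero, Pi.zero_apply, Nat.cast_zero, add_zero,
    one_mul, coeff_zero] using hcoeff

/-- Let `k` be a field of characteristic 2 and `f ∈ k[x,y]` irreducible with
nonzero constant term, with `f ∤ ∂f/∂y`, and having a monomial `x^i y^j` with
`i, j` both odd.  Then there are no `H, G, α` with `f ∤ H` and
`H² · x · y · ∂f/∂y + α f = G²`. -/
theorem statement3 (k : Type*) [Field k] [CharP k 2]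
    (f : MvPolynomial (Fin 2) k) (hirr : Irreducible f)
    (hconst : coeff 0 f ≠ 0)
    (hdy : ¬ f ∣ pderiv 1 f)
    (hodd : ∃ m ∈ f.support, Odd (m 0) ∧ Odd (m 1))
    (H G α : MvPolynomial (Fin 2) k) (hH : ¬ f ∣ H)
    (heq : H ^ 2 * X 0 * X 1 * pderiv 1 f + α * f = G ^ 2) :
    False :=
  statement3_general k f hirr hconst hdy H G α hH heq
end

section
/- Let k be a field and P, Q in k[x] two polynomials. The corank of the Sylvester matrix of P and Q (for given degree bounds equal to their degrees) equals the degree of gcd(P,Q). -/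
/-!
The rows of the Sylvester matrix are the coefficient vectors of `X ^ i * P` (`i < n`) and
`X ^ j * Q` (`j < m`), so its corank is the dimension of the space of pairs `(A, B)` with
`deg A < n`, `deg B < m` and `A * P + B * Q = 0`. Write `P = D * P₁`, `Q = D * Q₁` with
`D = gcd P Q` and `P₁, Q₁` coprime. Then `A * P₁ = -B * Q₁` forces `A = C * Q₁` and
`B = -C * P₁`, and the degree bounds on `A, B` amount to `deg C < deg D`; so the space of such
pairs is isomorphic to the polynomials of degree `< deg D`.
-/

open Polynomial Matrix

theorem EuclideanDomain.exists_eq_gcd_mul_isCoprime {R : Type*} [EuclideanDomain R]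
    [DecidableEq R] {a b : R} (h : gcd a b ≠ 0) :
    ∃ a₁ b₁, a = gcd a b * a₁ ∧ b = gcd a b * b₁ ∧ IsCoprime a₁ b₁ := by
  obtain ⟨a₁, ha⟩ := gcd_dvd_left a b
  obtain ⟨b₁, hb⟩ := gcd_dvd_right a b
  refine ⟨a₁, b₁, ha, hb, gcdA a b, gcdB a b, mul_left_cancel₀ h ?_⟩
  have hbezout := gcd_eq_gcd_ab a b
  linear_combination -hbezout - gcdA a b * ha - gcdB a b * hb

theorem Matrix.transpose_eq_sylvester_submatrix {R : Type*} [Semiring R] {m n : ℕ} {P Q : R[X]}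
    (hP : P.natDegree ≤ m) (hQ : Q.natDegree ≤ n) (S : Matrix (Fin (m + n)) (Fin (m + n)) R)
    (hS : ∀ i j : Fin (m + n),
      S i j = if (i : ℕ) < n
        then (if (i : ℕ) ≤ (j : ℕ) then P.coeff ((j : ℕ) - (i : ℕ)) else 0)
        else (if (i : ℕ) - n ≤ (j : ℕ) then Q.coeff ((j : ℕ) - ((i : ℕ) - n)) else 0)) :
    Sᵀ = (sylvester Q P n m).submatrix (finCongr (add_comm m n)) (finCongr (add_comm m n)) := by
  ext i j
  obtain ⟨j, rfl⟩ := (finCongr (add_comm m n)).symm.surjective j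
  rw [transpose_apply, hS, submatrix_apply, Equiv.apply_symm_apply, sylvester, of_apply]
  induction j using Fin.addCases with
  | left j =>
    simp only [Fin.addCases_left, finCongr_symm, finCongr_apply, Fin.val_cast, Fin.val_castAdd,
      j.isLt, if_true, Set.mem_Icc, ite_and]
    split_ifs <;> first | rfl | exact coeff_eq_zero_of_natDegree_lt (by omega)
  | right j =>
    simp only [Fin.addCases_right, finCongr_symm, finCongr_apply, Fin.val_cast, Fin.val_natAdd,
      Set.mem_Icc, ite_and, Nat.add_sub_cancel_left, add_lt_iff_neg_left, Nat.not_lt_zero,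
      if_false]
    split_ifs <;> first | rfl | exact coeff_eq_zero_of_natDegree_lt (by omega)

namespace Polynomial

theorem finrank_degreeLT {R : Type*} [Semiring R] [StrongRankCondition R] (n : ℕ) :
    Module.finrank R R[X]_n = n := by
  rw [Module.finrank_eq_card_basis (degreeLT.basis R n), Fintype.card_fin]

variable {K : Type*} [Field K]

theorem sub_rank_sylvester_eq_finrank_ker {m n : ℕ} {f g : K[X]} (hf : f.natDegree ≤ m)
    (hg : g.natDegree ≤ n) :
    m + n - (sylvester f g m n).rank =
      Module.finrank K (LinearMap.ker (sylvesterMap f g hf hg)) := by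
  have hrank := (sylvesterMap f g hf hg).finrank_range_add_finrank_ker
  rw [Module.finrank_prod, finrank_degreeLT, finrank_degreeLT] at hrank
  rw [Matrix.rank_eq_finrank_range_toLin _ (degreeLT.basis K (m + n))
    (((degreeLT.basis K m).prod (degreeLT.basis K n)).reindex finSumFinEquiv),
    ← toMatrix_sylvesterMap' f g hf hg, Matrix.toLin_toMatrix]
  omega

theorem mul_mem_degreeLT_iff {C D g : K[X]} (hD : D ≠ 0) (hg : g ≠ 0) :
    C * g ∈ K[X]_((D * g).natDegree) ↔ C ∈ K[X]_(D.natDegree) := by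
  rw [mem_degreeLT, mem_degreeLT, ← degree_eq_natDegree hD,
    ← degree_eq_natDegree (mul_ne_zero hD hg), degree_mul, degree_mul,
    WithBot.add_lt_add_iff_right (degree_ne_bot.2 hg)]

section kernel

variable {D f₁ g₁ : K[X]}

noncomputable def sylvesterKernelParam (hD : D ≠ 0) (hf₁ : f₁ ≠ 0) (hg₁ : g₁ ≠ 0) :
    K[X]_(D.natDegree) →ₗ[K] K[X]_((D * f₁).natDegree) × K[X]_((D * g₁).natDegree) :=
  ((-LinearMap.mulRight K f₁).restrict fun _ hC =>
      neg_mem ((mul_mem_degreeLT_iff hD hf₁).2 hC)).prod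
    ((LinearMap.mulRight K g₁).restrict fun _ hC => (mul_mem_degreeLT_iff hD hg₁).2 hC)

@[simp]
theorem coe_sylvesterKernelParam_fst (hD : D ≠ 0) (hf₁ : f₁ ≠ 0) (hg₁ : g₁ ≠ 0)
    (C : K[X]_(D.natDegree)) :
    ((sylvesterKernelParam hD hf₁ hg₁ C).1 : K[X]) = -(C * f₁) :=
  rfl

@[simp]
theorem coe_sylvesterKernelParam_snd (hD : D ≠ 0) (hf₁ : f₁ ≠ 0) (hg₁ : g₁ ≠ 0)
    (C : K[X]_(D.natDegree)) :
    ((sylvesterKernelParam hD hf₁ hg₁ C).2 : K[X]) = C * g₁ :=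
  rfl

theorem injective_sylvesterKernelParam (hD : D ≠ 0) (hf₁ : f₁ ≠ 0) (hg₁ : g₁ ≠ 0) :
    Function.Injective (sylvesterKernelParam hD hf₁ hg₁) := by
  intro C C' h
  have h₂ := congrArg (fun x => (x.2 : K[X])) h
  rw [coe_sylvesterKernelParam_snd, coe_sylvesterKernelParam_snd] at h₂
  exact Subtype.ext (mul_right_cancel₀ hg₁ h₂)

theorem range_sylvesterKernelParam (hD : D ≠ 0) (hf₁ : f₁ ≠ 0) (hg₁ : g₁ ≠ 0)
    (hcop : IsCoprime f₁ g₁) :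
    LinearMap.range (sylvesterKernelParam hD hf₁ hg₁) =
      LinearMap.ker (sylvesterMap (D * f₁) (D * g₁) le_rfl le_rfl) := by
  ext ⟨⟨p, hp⟩, ⟨q, hq⟩⟩
  rw [LinearMap.mem_ker, LinearMap.mem_range]
  constructor
  · rintro ⟨C, hC⟩
    rw [← hC]
    ext1
    rw [sylvesterMap_apply_coe, coe_sylvesterKernelParam_fst, coe_sylvesterKernelParam_snd,
      Submodule.coe_zero]
    ring
  · intro h
    have hpq : D * (f₁ * q + g₁ * p) = 0 := by
      rw [← Submodule.coe_eq_zero, sylvesterMap_apply_coe] at h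
      linear_combination h
    have hpq' := (mul_eq_zero.1 hpq).resolve_left hD
    obtain ⟨C, rfl⟩ : g₁ ∣ q :=
      hcop.symm.dvd_of_dvd_mul_left ⟨-p, by linear_combination hpq'⟩
    have hp' : p = -(C * f₁) := by
      have : g₁ * (p + C * f₁) = 0 := by linear_combination hpq'
      linear_combination (mul_eq_zero.1 this).resolve_left hg₁
    rw [mul_comm g₁ C] at hq
    refine ⟨⟨C, (mul_mem_degreeLT_iff hD hg₁).1 hq⟩, ?_⟩
    ext1 <;> ext1
    · exact hp'.symm
    · exact mul_comm C g₁

theorem finrank_ker_sylvesterMap_mul (hD : D ≠ 0) (hf₁ : f₁ ≠ 0) (hg₁ : g₁ ≠ 0)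
    (hcop : IsCoprime f₁ g₁) :
    Module.finrank K (LinearMap.ker (sylvesterMap (D * f₁) (D * g₁) le_rfl le_rfl)) =
      D.natDegree := by
  rw [← range_sylvesterKernelParam hD hf₁ hg₁ hcop,
    LinearMap.finrank_range_of_inj (injective_sylvesterKernelParam hD hf₁ hg₁),
    finrank_degreeLT]

end kernel

theorem sub_rank_sylvester_eq_natDegree {f g D f₁ g₁ : K[X]} (hf : f = D * f₁)
    (hg : g = D * g₁) (hf0 : f ≠ 0) (hg0 : g ≠ 0) (hcop : IsCoprime f₁ g₁) :
    f.natDegree + g.natDegree - (sylvester f g f.natDegree g.natDegree).rank = D.natDegree := by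
  subst hf hg
  rw [sub_rank_sylvester_eq_finrank_ker le_rfl le_rfl]
  exact finrank_ker_sylvesterMap_mul (left_ne_zero_of_mul hf0) (right_ne_zero_of_mul hf0)
    (right_ne_zero_of_mul hg0) hcop

end Polynomial

/-- The corank of the Sylvester matrix of two polynomials `P` (degree `m`) and
`Q` (degree `n`) over a field equals the degree of `gcd(P,Q)`.  The Sylvester
matrix is the `(m+n) × (m+n)` matrix whose first `n` rows are shifted
coefficient vectors of `P` and whose last `m` rows are shifted coefficient
vectors of `Q`. -/
theorem statement4 (k : Type*) [Field k] [DecidableEq k]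
    (m n : ℕ) (P Q : k[X]) (hP : P ≠ 0) (hQ : Q ≠ 0)
    (hPm : P.natDegree = m) (hQn : Q.natDegree = n)
    (S : Matrix (Fin (m + n)) (Fin (m + n)) k)
    (hS : ∀ i j : Fin (m + n),
      S i j = if (i : ℕ) < n
        then (if (i : ℕ) ≤ (j : ℕ) then P.coeff ((j : ℕ) - (i : ℕ)) else 0)
        else (if (i : ℕ) - n ≤ (j : ℕ) then Q.coeff ((j : ℕ) - ((i : ℕ) - n)) else 0)) :
    (m + n) - S.rank = (EuclideanDomain.gcd P Q).natDegree := by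
  subst hPm hQn
  have hgcd : EuclideanDomain.gcd P Q ≠ 0 := fun h => hP (EuclideanDomain.gcd_eq_zero_iff.1 h).1
  obtain ⟨P₁, Q₁, hP₁, hQ₁, hcop⟩ := EuclideanDomain.exists_eq_gcd_mul_isCoprime hgcd
  have hrank : S.rank = (sylvester Q P Q.natDegree P.natDegree).rank := by
    rw [← rank_transpose, transpose_eq_sylvester_submatrix le_rfl le_rfl S hS, rank_submatrix]
  rw [hrank, add_comm, sub_rank_sylvester_eq_natDegree hQ₁ hP₁ hQ hP hcop.symm]
end

section
/- The probability that a uniformly random matrix M in GL_g(F_2) satisfies det(M - Id) = 0 equals -sum_{r=1}^{g} prod_{j=1}^{r} 1/(1 - 2^j); in particular for g = 1, 2, 3, 4 these values are 1, 2/3, 5/7, 32/45 respectively. -/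
/-!
For `k ≤ n = dim V`, the group `GL(V)` over `𝔽_q` acts transitively on linearly independent
`k`-tuples, so by Burnside's lemma the number of such tuples fixed by `f`, averaged over `f`,
is `1`. A tuple is fixed by `f` exactly when it lies in the eigenspace `E_f` of `f` for the
eigenvalue `1`, so with `d = dim E_f` the average of `P_k(q^d) = ∏_{i<k} (q^d - q^i)` is `1`.
The `q`-binomial inversion `-∑_{1 ≤ k ≤ n} P_k(q^d) / (q;q)_k = [d ≠ 0]` for `d ≤ n` then
turns these averages into the proportion of `f` with eigenvalue `1`.
-/

open Finset MulAction Module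

section QPochhammer

variable {F : Type*} [Field F]

/-- The `q`-Pochhammer symbol `(q;q)_r`. -/
def qPochhammer (q : F) (r : ℕ) : F := ∏ j ∈ Icc 1 r, (1 - q ^ j)

lemma qPochhammer_succ (q : F) (r : ℕ) :
    qPochhammer q (r + 1) = qPochhammer q r * (1 - q ^ (r + 1)) :=
  prod_Icc_succ_top (by omega) _

variable [LinearOrder F] [IsStrictOrderedRing F] {q : F}

lemma one_sub_pow_ne_zero (hq : 1 < q) {j : ℕ} (hj : j ≠ 0) : 1 - q ^ j ≠ 0 :=
  sub_ne_zero.2 (one_lt_pow₀ hq hj).ne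

lemma qPochhammer_ne_zero (hq : 1 < q) (r : ℕ) : qPochhammer q r ≠ 0 :=
  prod_ne_zero_iff.2 fun _ hj => one_sub_pow_ne_zero hq (by grind)

lemma sum_prod_sub_pow_div_qPochhammer (hq : 1 < q) (K : ℕ) (x : F) :
    ∑ k ∈ Icc 1 K, (∏ i ∈ range k, (x - q ^ i)) / qPochhammer q k =
      (∏ i ∈ Icc 1 K, (x - q ^ i)) / qPochhammer q K - 1 := by
  induction K with
  | zero => simp [qPochhammer]
  | succ K ih =>
    have hK := qPochhammer_ne_zero hq K
    have hK1 := one_sub_pow_ne_zero hq K.succ_ne_zero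
    rw [sum_Icc_succ_top (by omega), ih, prod_range_eq_mul_Ico _ (by omega : 0 < K + 1),
      Ico_add_one_right_eq_Icc, prod_Icc_succ_top (by omega : 1 ≤ K + 1), qPochhammer_succ]
    field_simp
    ring

lemma neg_sum_prod_pow_sub_pow_div_qPochhammer (hq : 1 < q) {K d : ℕ} (hd : d ≤ K) :
    -∑ k ∈ Icc 1 K, (∏ i ∈ range k, (q ^ d - q ^ i)) / qPochhammer q k =
      if d = 0 then 0 else 1 := by
  rw [sum_prod_sub_pow_div_qPochhammer hq]
  split_ifs with h
  · subst h
    rw [pow_zero, ← qPochhammer, div_self (qPochhammer_ne_zero hq K), sub_self, neg_zero]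
  · rw [prod_eq_zero (i := d) (by simp; omega) (sub_self _), zero_div, zero_sub, neg_neg]

end QPochhammer

lemma Nat.cast_prod_range_pow_sub_pow {R : Type*} [CommRing R] {a : ℕ} (ha : 0 < a) (d k : ℕ) :
    ((∏ i ∈ range k, (a ^ d - a ^ i) : ℕ) : R) =
      ∏ i ∈ range k, ((a : R) ^ d - a ^ i) := by
  rcases le_or_gt k d with hk | hk
  · rw [Nat.cast_prod]
    refine prod_congr rfl fun i hi => ?_
    rw [Nat.cast_sub (Nat.pow_le_pow_right ha (by grind)), Nat.cast_pow, Nat.cast_pow]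
  · have hd : d ∈ range k := mem_range.2 hk
    rw [prod_eq_zero hd (Nat.sub_self (a ^ d)), prod_eq_zero hd (sub_self ((a : R) ^ d)),
      Nat.cast_zero]

lemma MulAction.sum_card_fixedBy_eq_card_group (G X : Type*) [Group G] [MulAction G X]
    [Fintype G] [Finite X] [Nonempty X] [IsPretransitive G X] :
    ∑ g : G, Nat.card (fixedBy X g) = Nat.card G := by
  classical
  have := Fintype.ofFinite X
  have := Fintype.ofFinite (orbitRel.Quotient G X)
  have := ((pretransitive_iff_unique_quotient_of_nonempty G X).1 ‹_›).some
  simpa [Nat.card_eq_fintype_card] using sum_card_fixedBy_eq_card_orbits_mul_card_group G X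

lemma Module.Basis.sumExtend_apply_inl {K V ι : Type*} [Field K] [AddCommGroup V] [Module K V]
    {v : ι → V} (hs : LinearIndependent K v) (i : ι) :
    Basis.sumExtend hs (Sum.inl i) = v i := by
  rw [Basis.sumExtend, Basis.reindex_apply, Basis.coe_extend]
  rfl

lemma Matrix.det_sub_one_eq_zero_iff_hasEigenvalue {n R : Type*} [Fintype n] [DecidableEq n]
    [CommRing R] [IsDomain R] (A : Matrix n n R) :
    (A - 1).det = 0 ↔ End.HasEigenvalue (Matrix.toLin' A) 1 := by
  rw [← exists_mulVec_eq_zero_iff, End.hasEigenvalue_iff, Submodule.ne_bot_iff]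
  simp [sub_mulVec, sub_eq_zero, and_comm]

lemma Matrix.GeneralLinearGroup.card_det_sub_one_eq_zero {n K : Type*} [Fintype n]
    [DecidableEq n] [Field K] :
    Nat.card {M : GL n K // ((M : Matrix n n K) - 1).det = 0} =
      Nat.card {f : LinearMap.GeneralLinearGroup K (n → K) //
        End.HasEigenvalue (f : End K (n → K)) 1} :=
  Nat.card_congr <| toLin.toEquiv.subtypeEquiv fun _ => det_sub_one_eq_zero_iff_hasEigenvalue _

section GeneralLinearGroup

variable (K V : Type*) [Field K] [AddCommGroup V] [Module K V]

local notation "GL(" V ")" => LinearMap.GeneralLinearGroup K V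

def linearIndependentTuples (k : ℕ) : SubMulAction GL(V) (Fin k → V) where
  carrier := {s | LinearIndependent K s}
  smul_mem' f _ hs := hs.map' _ f.toLinearEquiv.ker

variable {K V}

/-- Extend two linearly independent `k`-tuples to bases indexed by `Fin k ⊕ ι` and
`Fin k ⊕ ι'`; a dimension count gives `ι ≃ ι'`, hence an automorphism matching the bases. -/
instance [FiniteDimensional K V] (k : ℕ) :
    IsPretransitive GL(V) (linearIndependentTuples K V k) where
  exists_smul_eq := by
    rintro ⟨s, hs : LinearIndependent K s⟩ ⟨t, ht : LinearIndependent K t⟩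
    let bs := Basis.sumExtend hs
    let bt := Basis.sumExtend ht
    have := Module.Finite.finite_basis bs
    have := Module.Finite.finite_basis bt
    have := Finite.of_injective _ (Sum.inr_injective (α := Fin k) (β := Basis.sumExtendIndex hs))
    have := Finite.of_injective _ (Sum.inr_injective (α := Fin k) (β := Basis.sumExtendIndex ht))
    have hcard : Nat.card (Basis.sumExtendIndex hs) = Nat.card (Basis.sumExtendIndex ht) := by
      have h := (finrank_eq_nat_card_basis bs).symm.trans (finrank_eq_nat_card_basis bt)
      rw [Nat.card_sum, Nat.card_sum] at h
      omega
    obtain ⟨e⟩ := Finite.card_eq.1 hcard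
    refine ⟨.ofLinearEquiv (bs.equiv bt (.sumCongr (.refl _) e)),
      Subtype.ext (funext fun i => ?_)⟩
    simpa [bs, bt, Basis.sumExtend_apply_inl] using
      bs.equiv_apply (.inl i) bt (.sumCongr (.refl _) e)

lemma nonempty_linearIndependentTuples [FiniteDimensional K V] {k : ℕ} (hk : k ≤ finrank K V) :
    Nonempty (linearIndependentTuples K V k) :=
  ⟨⟨_, (finBasis K V).linearIndependent.comp _ (Fin.castLE_injective hk)⟩⟩

lemma mem_fixedBy_linearIndependentTuples_iff {k : ℕ} (f : GL(V))
    (s : linearIndependentTuples K V k) :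
    s ∈ fixedBy _ f ↔ ∀ i, (s : Fin k → V) i ∈ End.eigenspace (f : End K V) 1 := by
  simp [mem_fixedBy, Subtype.ext_iff, funext_iff, Units.smul_def, End.smul_def]

def fixedByLinearIndependentTuplesEquiv (k : ℕ) (f : GL(V)) :
    fixedBy (linearIndependentTuples K V k) f ≃
      {s : Fin k → End.eigenspace (f : End K V) 1 // LinearIndependent K s} where
  toFun s := ⟨fun i => ⟨s.1.1 i, (mem_fixedBy_linearIndependentTuples_iff f s.1).1 s.2 i⟩,
    .of_comp (Submodule.subtype _) s.1.2⟩
  invFun s := ⟨⟨fun i => s.1 i, s.2.map' _ (Submodule.ker_subtype _)⟩,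
    (mem_fixedBy_linearIndependentTuples_iff f _).2 fun i => (s.1 i).2⟩

instance [Finite V] : Finite (End K V) := FunLike.finite _

variable [Fintype K] [Finite V]

local notation "q" => Fintype.card K

lemma card_linearIndependent_eq_prod_range (k : ℕ) :
    Nat.card {s : Fin k → V // LinearIndependent K s} =
      ∏ i ∈ range k, (q ^ finrank K V - q ^ i) := by
  rcases le_or_gt k (finrank K V) with hk | hk
  · rw [card_linearIndependent hk, Fin.prod_univ_eq_prod_range (fun i => q ^ finrank K V - q ^ i)]
  · rw [prod_eq_zero (mem_range.2 hk) (Nat.sub_self (q ^ finrank K V)), Nat.card_eq_zero]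
    exact .inl ⟨fun s => by simpa using s.2.fintype_card_le_finrank.trans_lt hk⟩

lemma card_fixedBy_linearIndependentTuples (k : ℕ) (f : GL(V)) :
    Nat.card (fixedBy (linearIndependentTuples K V k) f) =
      ∏ i ∈ range k, (q ^ finrank K (End.eigenspace (f : End K V) 1) - q ^ i) := by
  rw [Nat.card_congr (fixedByLinearIndependentTuplesEquiv k f),
    card_linearIndependent_eq_prod_range]

attribute [local instance] Fintype.ofFinite

lemma sum_prod_pow_finrank_eigenspace_sub_pow {k : ℕ} (hk : k ≤ finrank K V) :
    ∑ f : GL(V), ∏ i ∈ range k,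
        ((q : ℚ) ^ finrank K (End.eigenspace (f : End K V) 1) - q ^ i) = Nat.card GL(V) := by
  have := nonempty_linearIndependentTuples (K := K) (V := V) hk
  rw [← sum_card_fixedBy_eq_card_group GL(V) (linearIndependentTuples K V k), Nat.cast_sum]
  refine sum_congr rfl fun f _ => ?_
  rw [card_fixedBy_linearIndependentTuples, Nat.cast_prod_range_pow_sub_pow Fintype.card_pos]

theorem card_hasEigenvalue_one_div_card :
    (Nat.card {f : GL(V) // End.HasEigenvalue (f : End K V) 1} : ℚ) / Nat.card GL(V) =
      -∑ r ∈ Icc 1 (finrank K V), 1 / qPochhammer (q : ℚ) r := by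
  have hq : (1 : ℚ) < q := by exact_mod_cast Fintype.one_lt_card
  have hG : (Nat.card GL(V) : ℚ) ≠ 0 := by exact_mod_cast Nat.card_pos.ne'
  have hEig (f : GL(V)) :
      End.HasEigenvalue (f : End K V) 1 ↔ ¬finrank K (End.eigenspace (f : End K V) 1) = 0 := by
    rw [End.hasEigenvalue_iff, Ne, Submodule.finrank_eq_zero]
  rw [div_eq_iff hG, Nat.card_congr (Equiv.subtypeEquivRight hEig), Nat.card_eq_fintype_card,
    Fintype.card_subtype, natCast_card_filter]
  simp only [ite_not]
  calc ∑ f : GL(V), (if finrank K (End.eigenspace (f : End K V) 1) = 0 then 0 else 1 : ℚ)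
      = -∑ r ∈ Icc 1 (finrank K V), ∑ f : GL(V),
          (∏ i ∈ range r, ((q : ℚ) ^ finrank K (End.eigenspace (f : End K V) 1) - q ^ i)) /
            qPochhammer (q : ℚ) r := by
        rw [sum_comm, ← sum_neg_distrib]
        exact sum_congr rfl fun f _ =>
          (neg_sum_prod_pow_sub_pow_div_qPochhammer hq (Submodule.finrank_le _)).symm
    _ = (-∑ r ∈ Icc 1 (finrank K V), 1 / qPochhammer (q : ℚ) r) * Nat.card GL(V) := by
        rw [neg_mul, sum_mul]
        refine congrArg _ (sum_congr rfl fun r hr => ?_)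
        rw [← sum_div, sum_prod_pow_finrank_eigenspace_sub_pow (mem_Icc.1 hr).2,
          one_div_mul_eq_div]

end GeneralLinearGroup

theorem statement14_general (g : ℕ) :
    (Nat.card {M : GL (Fin g) (ZMod 2) //
        ((M : Matrix (Fin g) (Fin g) (ZMod 2)) - 1).det = 0} : ℚ) /
      (Nat.card (GL (Fin g) (ZMod 2)) : ℚ) =
    - ∑ r ∈ Finset.Icc 1 g, ∏ j ∈ Finset.Icc 1 r, 1 / (1 - (2 : ℚ) ^ j) := by
  have h := card_hasEigenvalue_one_div_card (K := ZMod 2) (V := Fin g → ZMod 2)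
  rw [finrank_fin_fun, ZMod.card, Nat.cast_ofNat] at h
  rw [Matrix.GeneralLinearGroup.card_det_sub_one_eq_zero,
    Nat.card_congr Matrix.GeneralLinearGroup.toLin.toEquiv, h]
  simp [qPochhammer, prod_inv_distrib]

/-- The probability that a uniformly random `M ∈ GL_g(𝔽₂)` satisfies
`det(M - Id) = 0` equals `-∑_{r=1}^{g} ∏_{j=1}^{r} 1/(1 - 2^j)`. -/
theorem statement14 (g : ℕ) (hg : 1 ≤ g) :
    (Nat.card {M : GL (Fin g) (ZMod 2) //
        ((M : Matrix (Fin g) (Fin g) (ZMod 2)) - 1).det = 0} : ℚ) /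
      (Nat.card (GL (Fin g) (ZMod 2)) : ℚ) =
    - ∑ r ∈ Finset.Icc 1 g, ∏ j ∈ Finset.Icc 1 r, 1 / (1 - (2 : ℚ) ^ j) :=
  statement14_general g
end

section
/- Let k be a field of characteristic 2 and f ∈ k[x,y] irreducible such that f does not divide ∂f/∂y. Suppose H, G, α ∈ k[x,y] satisfy H^2·x·y·(∂f/∂y) + α·f = G^2 with f not dividing H. Then f divides α + H^2·x. -/
/-!
In characteristic 2 every square has zero partial derivatives, and so does every second derivative
`∂²/∂y²`. Differentiating the identity `H² x y ∂f/∂y + α f = G²` in `y` therefore leaves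
`(α + H² x) ∂f/∂y = ∂α/∂y · f`; since `f` is prime and does not divide `∂f/∂y`, it divides
`α + H² x`.
-/

open MvPolynomial

section CharTwo

variable {σ R : Type*} [CommRing R] [CharP R 2]

theorem MvPolynomial.pderiv_sq_of_charTwo_s16 (i : σ) (g : MvPolynomial σ R) :
    pderiv i (g ^ 2) = 0 := by
  rw [pow_two, pderiv_mul, mul_comm, CharTwo.add_self_eq_zero]

theorem MvPolynomial.pderiv_pderiv_self_of_charTwo_s16 (i : σ) (g : MvPolynomial σ R) :
    pderiv i (pderiv i g) = 0 := by
  classical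
  induction g using MvPolynomial.induction_on with
  | C a => simp
  | add p q hp hq => simp [hp, hq]
  | mul_X p n hp =>
    obtain rfl | hn := eq_or_ne n i
    · simp [hp, CharTwo.add_self_eq_zero]
    · simp [hp, pderiv_X_of_ne hn]

theorem MvPolynomial.add_sq_mul_X_mul_pderiv_eq
    {i j : σ} (hji : j ≠ i) {f H G α : MvPolynomial σ R}
    (heq : H ^ 2 * X j * X i * pderiv i f + α * f = G ^ 2) :
    (α + H ^ 2 * X j) * pderiv i f = pderiv i α * f := by
  have hd := congrArg (pderiv i) heq
  simp only [map_add, pderiv_mul, pderiv_sq_of_charTwo_s16, pderiv_X_of_ne hji, pderiv_X_self,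
    pderiv_pderiv_self_of_charTwo_s16] at hd
  linear_combination hd - pderiv i α * f * CharTwo.two_eq_zero (R := MvPolynomial σ R)

end CharTwo

theorem statement16_general (k : Type*) [Field k] [CharP k 2]
    (f : MvPolynomial (Fin 2) k) (hirr : Irreducible f)
    (hdy : ¬ f ∣ pderiv 1 f)
    (H G α : MvPolynomial (Fin 2) k)
    (heq : H ^ 2 * X 0 * X 1 * pderiv 1 f + α * f = G ^ 2) :
    f ∣ α + H ^ 2 * X 0 := by
  have key := add_sq_mul_X_mul_pderiv_eq (by decide) heq
  have hdvd : f ∣ (α + H ^ 2 * X 0) * pderiv 1 f := key ▸ dvd_mul_left f _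
  exact (hirr.prime.dvd_or_dvd hdvd).resolve_right hdy

/-- Let `k` have characteristic 2 and `f ∈ k[x,y]` be irreducible with
`f ∤ ∂f/∂y`.  If `H² · x · y · ∂f/∂y + α f = G²` with `f ∤ H`, then
`f ∣ α + H² x`. -/
theorem statement16 (k : Type*) [Field k] [CharP k 2]
    (f : MvPolynomial (Fin 2) k) (hirr : Irreducible f)
    (hdy : ¬ f ∣ pderiv 1 f)
    (H G α : MvPolynomial (Fin 2) k) (hH : ¬ f ∣ H)
    (heq : H ^ 2 * X 0 * X 1 * pderiv 1 f + α * f = G ^ 2) :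
    f ∣ α + H ^ 2 * X 0 :=
  statement16_general k f hirr hdy H G α heq
end

section
/- Over a finite field F_q, the number of pairs (P, Q) of polynomials with deg P = m, deg Q = n (m, n ≥ 1) and gcd(P, Q) = 1, where P, Q are monic, equals q^{m+n} - q^{m+n-1}; equivalently the proportion of coprime pairs of monic polynomials of given positive degrees is 1 - 1/q. -/
/-!
Every pair `(P, Q)` of monic polynomials factors uniquely as `(D * A, D * B)` with
`D = gcd P Q` monic and `A`, `B` coprime monic. Counting both sides by `d = deg D` gives
`q ^ (m + n) = ∑ d ≤ min m n, q ^ d * c (m - d) (n - d)`, where `c a b` counts coprime pairs.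
For `m, n ≥ 1` the terms with `d ≥ 1` are `q` times the same sum for `(m - 1, n - 1)`, that is
`q * q ^ (m + n - 2)`, and the term `d = 0` is `c m n`.
-/

open Polynomial

theorem gcd_mul_mul_of_isCoprime {R : Type*} [CommSemiring R] [StrongNormalizedGCDMonoid R]
    {a b c : R} (h : IsCoprime b c) : gcd (a * b) (a * c) = normalize a := by
  rw [_root_.gcd_mul_left, ← _root_.normalize_gcd,
    normalize_eq_one.mpr (gcd_isUnit_iff_isRelPrime.mpr h.isRelPrime), mul_one]

namespace Polynomial

variable (k : Type*) [Field k]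

abbrev MonicOfDegree (d : ℕ) := {p : k[X] // p.Monic ∧ p.natDegree = d}

abbrev CoprimeMonicPairs (m n : ℕ) := {pq : k[X] × k[X] //
    pq.1.Monic ∧ pq.2.Monic ∧ pq.1.natDegree = m ∧ pq.2.natDegree = n ∧ IsCoprime pq.1 pq.2}

noncomputable def monicOfDegreeEquiv (d : ℕ) : MonicOfDegree k d ≃ (Fin d → k) :=
  (monicEquivDegreeLT d).trans (degreeLTEquiv k d).toEquiv

instance [Finite k] (d : ℕ) : Finite (MonicOfDegree k d) :=
  .of_equiv _ (monicOfDegreeEquiv k d).symm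

instance [Finite k] (m n : ℕ) : Finite (CoprimeMonicPairs k m n) :=
  .of_injective (β := MonicOfDegree k m × MonicOfDegree k n)
    (fun x ↦ (⟨x.1.1, x.2.1, x.2.2.2.1⟩, ⟨x.1.2, x.2.2.1, x.2.2.2.2.1⟩))
    fun _ _ h ↦ Subtype.ext (Prod.ext (congrArg (·.1.1) h) (congrArg (·.2.1) h))

theorem card_monicOfDegree [Fintype k] (d : ℕ) :
    Nat.card (MonicOfDegree k d) = Fintype.card k ^ d := by
  simp [Nat.card_congr (monicOfDegreeEquiv k d)]

noncomputable def mulCoprimeMonicPair (m n : ℕ) :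
    (Σ d : Fin (min m n + 1), MonicOfDegree k d × CoprimeMonicPairs k (m - d) (n - d)) →
      MonicOfDegree k m × MonicOfDegree k n
  | ⟨d, ⟨D, hD, hDd⟩, ⟨⟨A, B⟩, hA, hB, hAd, hBd, _⟩⟩ =>
    have := d.isLt
    (⟨D * A, hD.mul hA, by rw [hD.natDegree_mul hA, hDd, hAd]; omega⟩,
      ⟨D * B, hD.mul hB, by rw [hD.natDegree_mul hB, hDd, hBd]; omega⟩)

theorem mulCoprimeMonicPair_injective (m n : ℕ) :
    Function.Injective (mulCoprimeMonicPair k m n) := by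
  classical
  rintro ⟨d, ⟨D, hD, hDd⟩, ⟨⟨A, B⟩, hA, hB, _, _, hAB⟩⟩
    ⟨d', ⟨D', hD', hDd'⟩, ⟨⟨A', B'⟩, hA', hB', _, _, hAB'⟩⟩ h
  simp only [mulCoprimeMonicPair, Prod.mk.injEq, Subtype.mk.injEq] at h
  obtain ⟨hDA, hDB⟩ := h
  have hDD' : D = D' := by
    rw [← hD.normalize_eq_self, ← hD'.normalize_eq_self, ← gcd_mul_mul_of_isCoprime hAB,
      ← gcd_mul_mul_of_isCoprime hAB', hDA, hDB]
  subst hDD'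
  obtain rfl : d = d' := Fin.ext (hDd.symm.trans hDd')
  obtain rfl := mul_left_cancel₀ hD.ne_zero hDA
  obtain rfl := mul_left_cancel₀ hD.ne_zero hDB
  rfl

theorem mulCoprimeMonicPair_surjective (m n : ℕ) :
    Function.Surjective (mulCoprimeMonicPair k m n) := by
  classical
  rintro ⟨⟨P, hP, rfl⟩, ⟨Q, hQ, rfl⟩⟩
  obtain ⟨A, B, hPA, hQB, hAB⟩ := extract_gcd P Q
  have hD : (gcd P Q).Monic := by
    rw [← _root_.normalize_gcd]
    exact monic_normalize (gcd_ne_zero_of_left hP.ne_zero)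
  have hA : A.Monic := hD.of_mul_monic_left (hPA ▸ hP)
  have hB : B.Monic := hD.of_mul_monic_left (hQB ▸ hQ)
  have hPdeg : (gcd P Q).natDegree + A.natDegree = P.natDegree := by
    rw [← hD.natDegree_mul hA, ← hPA]
  have hQdeg : (gcd P Q).natDegree + B.natDegree = Q.natDegree := by
    rw [← hD.natDegree_mul hB, ← hQB]
  refine ⟨⟨⟨(gcd P Q).natDegree, by omega⟩, ⟨gcd P Q, hD, rfl⟩,
    ⟨(A, B), hA, hB, by dsimp only; omega, by dsimp only; omega,
      (gcd_isUnit_iff A B).mp hAB⟩⟩, ?_⟩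
  simp only [mulCoprimeMonicPair, Prod.mk.injEq, Subtype.mk.injEq]
  exact ⟨hPA.symm, hQB.symm⟩

theorem pow_add_eq_sum_card_coprimeMonicPairs [Fintype k] (m n : ℕ) :
    Fintype.card k ^ (m + n) = ∑ d ∈ Finset.range (min m n + 1),
      Fintype.card k ^ d * Nat.card (CoprimeMonicPairs k (m - d) (n - d)) := by
  rw [← Fin.sum_univ_eq_sum_range, pow_add, ← card_monicOfDegree, ← card_monicOfDegree,
    ← Nat.card_prod, ← Nat.card_eq_of_bijective _ ⟨mulCoprimeMonicPair_injective k m n,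
      mulCoprimeMonicPair_surjective k m n⟩, Nat.card_sigma]
  simp only [Nat.card_prod, card_monicOfDegree]

theorem card_coprimeMonicPairs_add_pow [Fintype k] (m n : ℕ) :
    Nat.card (CoprimeMonicPairs k (m + 1) (n + 1)) + Fintype.card k ^ (m + n + 1) =
      Fintype.card k ^ (m + n + 2) := by
  have h := pow_add_eq_sum_card_coprimeMonicPairs k (m + 1) (n + 1)
  rw [Nat.add_min_add_right, Finset.sum_range_succ'] at h
  simp only [Nat.add_sub_add_right, pow_succ', mul_assoc, ← Finset.mul_sum,
    ← pow_add_eq_sum_card_coprimeMonicPairs, pow_zero, one_mul, Nat.sub_zero] at h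
  rw [show m + n + 2 = m + 1 + (n + 1) by ring, h, pow_succ', add_comm]

end Polynomial

theorem statement17_general (k : Type*) [Field k] [Fintype k]
    (m n : ℕ) (hm : 1 ≤ m) (hn : 1 ≤ n) :
    Nat.card {pq : k[X] × k[X] //
        pq.1.Monic ∧ pq.2.Monic ∧ pq.1.natDegree = m ∧ pq.2.natDegree = n ∧
        IsCoprime pq.1 pq.2} =
      Fintype.card k ^ (m + n) - Fintype.card k ^ (m + n - 1) := by
  obtain ⟨m, rfl⟩ := Nat.exists_eq_add_of_le' hm
  obtain ⟨n, rfl⟩ := Nat.exists_eq_add_of_le' hn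
  rw [show m + 1 + (n + 1) = m + n + 2 by ring, show m + n + 2 - 1 = m + n + 1 by rfl]
  exact Nat.eq_sub_of_add_eq (card_coprimeMonicPairs_add_pow k m n)

/-- Over a finite field `F_q`, the number of coprime pairs `(P, Q)` of monic
polynomials with `deg P = m ≥ 1`, `deg Q = n ≥ 1` equals
`q^{m+n} - q^{m+n-1}`. -/
theorem statement17 (k : Type*) [Field k] [Fintype k] [DecidableEq k]
    (m n : ℕ) (hm : 1 ≤ m) (hn : 1 ≤ n) :
    Nat.card {pq : k[X] × k[X] //
        pq.1.Monic ∧ pq.2.Monic ∧ pq.1.natDegree = m ∧ pq.2.natDegree = n ∧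
        IsCoprime pq.1 pq.2} =
      Fintype.card k ^ (m + n) - Fintype.card k ^ (m + n - 1) :=
  statement17_general k m n hm hn
end
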